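/- The differential algebra D(X) = kT (with T the free monoid on D^ω(X) and the derivations D_j defined recursively) is the free differential algebra on X: for any differential algebra A with operators D and any map φ : X → A, there exists a unique D-homomorphism φ* : D(X) → A extending φ. -/

import Mathlib

/-- A letter `D^ī(x)` of the free differential algebra: the word `ī` of operator
indices together with the generator `x`. -/
abbrev Letter (J X : Type*) := List J × X

variable {k J X : Type*} [CommRing k]

/-- The monomial of `D(X) = k⟨(D^ω(X))^*⟩` corresponding to a word `u ∈ T`. -/
noncomputable def monoW (u : List (Letter J X)) : MonoidAlgebra k (FreeMonoid (Letter J X)) :=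
  MonoidAlgebra.single (FreeMonoid.ofList u) 1

/-- Action of the derivation `D_j` on a word, defined by the Leibniz rule. -/
noncomputable def derivMon (j : J) : List (Letter J X) → MonoidAlgebra k (FreeMonoid (Letter J X))
  | [] => 0
  | (a, x) :: v =>
      monoW ((j :: a, x) :: v) + monoW [(a, x)] * derivMon j v

/-- The derivation `D_j` on the free differential algebra `D(X)`. -/
noncomputable def Dop (j : J) :
    MonoidAlgebra k (FreeMonoid (Letter J X)) →ₗ[k] MonoidAlgebra k (FreeMonoid (Letter J X)) :=
  (Finsupp.lsum k fun (u : FreeMonoid (Letter J X)) =>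
    LinearMap.toSpanSingleton k (MonoidAlgebra k (FreeMonoid (Letter J X))) (derivMon j u.toList)) ∘ₗ
    (MonoidAlgebra.coeffLinearEquiv k).toLinearMap

/-- The composite operator `D^j̄ = D_{j₁} ∘ ⋯ ∘ D_{jₙ}`. -/
noncomputable def Dops (jb : List J) :
    MonoidAlgebra k (FreeMonoid (Letter J X)) →ₗ[k] MonoidAlgebra k (FreeMonoid (Letter J X)) :=
  jb.foldr (fun j m => (Dop j).comp m) LinearMap.id

/-- `d^j̄(u)`: prepend the operator word `j̄` to the first letter of `u`. -/
def dHat (jb : List J) : List (Letter J X) → List (Letter J X)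
  | [] => []
  | (a, x) :: v => (jb ++ a, x) :: v

/-- Coefficient of the word `u` in `f ∈ D(X)`. -/
noncomputable def coeffW (f : MonoidAlgebra k (FreeMonoid (Letter J X)))
    (u : List (Letter J X)) : k := f.coeff (FreeMonoid.ofList u)

section Order
variable [LinearOrder J] [LinearOrder X]

/-- The order on letters: compare `wt(D^ī(x)) = (x; m, i₁, …, i_m)` lexicographically. -/
def LetterLt (a b : Letter J X) : Prop :=
  a.2 < b.2 ∨ (a.2 = b.2 ∧ (a.1.length < b.1.length ∨
    (a.1.length = b.1.length ∧ List.Lex (· < ·) a.1 b.1)))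

/-- The deg-lex order on words: first by length, then lexicographically. -/
def DegLexLt (u v : List (Letter J X)) : Prop :=
  u.length < v.length ∨ (u.length = v.length ∧ List.Lex LetterLt u v)

/-- `u` is the leading term of `f`. -/
def IsLT (f : MonoidAlgebra k (FreeMonoid (Letter J X))) (u : List (Letter J X)) : Prop :=
  coeffW f u ≠ 0 ∧ ∀ v, coeffW f v ≠ 0 → v ≠ u → DegLexLt v u

/-- `f` is monic with leading term `u`. -/
def MonicW (f : MonoidAlgebra k (FreeMonoid (Letter J X))) (u : List (Letter J X)) : Prop :=
  IsLT f u ∧ coeffW f u = 1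

end Order

/-- Membership in the `D`-ideal generated by `S`. -/
inductive InDIdeal (S : Set (MonoidAlgebra k (FreeMonoid (Letter J X)))) :
    MonoidAlgebra k (FreeMonoid (Letter J X)) → Prop
  | of : ∀ s ∈ S, InDIdeal S s
  | zero : InDIdeal S 0
  | add : ∀ {a b}, InDIdeal S a → InDIdeal S b → InDIdeal S (a + b)
  | smul : ∀ (c : k) {a}, InDIdeal S a → InDIdeal S (c • a)
  | mul_left : ∀ (g) {a}, InDIdeal S a → InDIdeal S (g * a)
  | mul_right : ∀ (g) {a}, InDIdeal S a → InDIdeal S (a * g)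
  | deriv : ∀ (j : J) {a}, InDIdeal S a → InDIdeal S (Dop j a)

/-- `(S,𝒟)`-words: `a · D^j̄(s) · b` with `s ∈ S`. -/
def IsSDWord (S : Set (MonoidAlgebra k (FreeMonoid (Letter J X))))
    (g : MonoidAlgebra k (FreeMonoid (Letter J X))) : Prop :=
  ∃ (a b : List (Letter J X)) (jb : List J), ∃ s ∈ S, g = monoW a * Dops jb s * monoW b

section Order2
variable [LinearOrder J] [LinearOrder X]

/-- `f ≡ 0 mod (S, w)`: `f` is a linear combination of `(S,𝒟)`-words with leading term `< w`. -/
def TrivMod (S : Set (MonoidAlgebra k (FreeMonoid (Letter J X))))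
    (w : List (Letter J X)) (f : MonoidAlgebra k (FreeMonoid (Letter J X))) : Prop :=
  f ∈ Submodule.span k {g | IsSDWord S g ∧ ∃ l, IsLT g l ∧ DegLexLt l w}

/-- `S` is a Gröbner–Shirshov basis: all compositions of elements of `S` are trivial. -/
def IsGSB (S : Set (MonoidAlgebra k (FreeMonoid (Letter J X)))) : Prop :=
  ∀ f ∈ S, ∀ g ∈ S, ∀ fb gb, MonicW f fb → MonicW g gb →
    (∀ a b jb, gb ≠ [] → fb = a ++ dHat jb gb ++ b →
        TrivMod S fb (f - monoW a * Dops jb g * monoW b)) ∧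
    (∀ ib b, fb ≠ [] → dHat ib fb = gb ++ b →
        TrivMod S (dHat ib fb) (Dops ib f - g * monoW b)) ∧
    (∀ a b jb, a ≠ [] → b ≠ [] → fb ≠ [] → gb ≠ [] →
        fb ++ b = a ++ dHat jb gb → (fb ++ b).length < fb.length + gb.length →
        TrivMod S (fb ++ b) (f * monoW b - monoW a * Dops jb g))

/-- `Irr(S)`: words containing no subword `d^ī(s̄)` with `s ∈ S`. -/
def Irr (S : Set (MonoidAlgebra k (FreeMonoid (Letter J X)))) : Set (List (Letter J X)) :=
  {u | ¬ ∃ (a b : List (Letter J X)) (ib : List J), ∃ s ∈ S, ∃ sb, IsLT s sb ∧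
        u = a ++ dHat ib sb ++ b}

end Order2

/-- The `D`-ideal generated by `S`, as a `k`-submodule of `D(X)`. -/
noncomputable def DIdealSub (S : Set (MonoidAlgebra k (FreeMonoid (Letter J X)))) :
    Submodule k (MonoidAlgebra k (FreeMonoid (Letter J X))) where
  carrier := {f | InDIdeal S f}
  add_mem' := fun h1 h2 => InDIdeal.add h1 h2
  zero_mem' := InDIdeal.zero
  smul_mem' := fun c _ h => InDIdeal.smul c h

section Aux

variable {A : Type*} [Ring A] [Algebra k A]

/-- Image of a letter `(ī, x)` under the unique extension: `d^ī(φ x)`. -/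
noncomputable def letMap (d : J → (A →ₗ[k] A)) (φ : X → A) : Letter J X → A
  | (ib, x) => ib.foldr (fun j a => d j a) (φ x)

lemma Dop_single (j : J) (m : FreeMonoid (Letter J X)) (b : k) :
    (Dop j (MonoidAlgebra.single m b) : MonoidAlgebra k (FreeMonoid (Letter J X)))
      = b • derivMon j m.toList := by
  show (Finsupp.lsum k fun u =>
      LinearMap.toSpanSingleton k (MonoidAlgebra k (FreeMonoid (Letter J X)))
        (derivMon j u.toList)) (Finsupp.single m b) = _
  rw [Finsupp.lsum_single, LinearMap.toSpanSingleton_apply]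

lemma Dop_monoW (j : J) (u : List (Letter J X)) :
    (Dop j (monoW u) : MonoidAlgebra k (FreeMonoid (Letter J X))) = derivMon j u := by
  rw [monoW, Dop_single, one_smul, FreeMonoid.toList_ofList]

lemma monoW_cons (l : Letter J X) (v : List (Letter J X)) :
    (monoW (l :: v) : MonoidAlgebra k (FreeMonoid (Letter J X)))
      = monoW [l] * monoW v := by
  rw [monoW, monoW, monoW, MonoidAlgebra.single_mul_single, one_mul]
  congr 1

lemma Dop_monoW_single (j : J) (ib : List J) (x : X) :
    (Dop j (monoW [(ib, x)]) : MonoidAlgebra k (FreeMonoid (Letter J X)))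
      = monoW [((j :: ib), x)] := by
  rw [Dop_monoW]
  show monoW [(j :: ib, x)] + monoW [(ib, x)] * (0 : MonoidAlgebra k (FreeMonoid (Letter J X)))
      = _
  rw [mul_zero, add_zero]

end Aux

/-- `D(X)` is the free differential algebra on `X`: every map `φ : X → A` into a
differential algebra `(A, d)` extends uniquely to a `𝒟`-homomorphism. -/
theorem stmt1 {A : Type*} [Ring A] [Algebra k A] (d : J → (A →ₗ[k] A))
    (hder : ∀ (j : J) (a b : A), d j (a * b) = d j a * b + a * d j b)
    (hd : Function.Injective d) (φ : X → A) :
    ∃! ψ : MonoidAlgebra k (FreeMonoid (Letter J X)) →ₐ[k] A,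
      (∀ (j : J) (f : MonoidAlgebra k (FreeMonoid (Letter J X))), ψ (Dop j f) = d j (ψ f)) ∧
      (∀ x : X, ψ (monoW [(([] : List J), x)]) = φ x) := by
  classical
  set L : Letter J X → A := letMap d φ with hL
  set ψ : MonoidAlgebra k (FreeMonoid (Letter J X)) →ₐ[k] A :=
    MonoidAlgebra.lift k A (FreeMonoid (Letter J X)) (FreeMonoid.lift L) with hψ
  have d_one : ∀ j : J, d j (1 : A) = 0 := by
    intro j
    have h := hder j 1 1
    simp only [mul_one, one_mul] at h
    exact (left_eq_add.mp h)
  have psi_monoW : ∀ u : List (Letter J X), ψ (monoW u) = (u.map L).prod := by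
    intro u
    rw [hψ, monoW, MonoidAlgebra.lift_single, one_smul, FreeMonoid.lift_apply,
      FreeMonoid.toList_ofList]
  have psi_deriv : ∀ (j : J) (u : List (Letter J X)),
      ψ (derivMon j u) = d j (ψ (monoW u)) := by
    intro j u
    induction u with
    | nil =>
        rw [show (derivMon j ([] : List (Letter J X)) :
            MonoidAlgebra k (FreeMonoid (Letter J X))) = 0 from rfl, map_zero,
          psi_monoW, List.map_nil, List.prod_nil, d_one]
    | cons l v ih =>
        obtain ⟨a, x⟩ := l
        rw [show (derivMon j ((a, x) :: v) : MonoidAlgebra k (FreeMonoid (Letter J X)))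
            = monoW ((j :: a, x) :: v) + monoW [(a, x)] * derivMon j v from rfl]
        rw [map_add, map_mul, ih, psi_monoW, psi_monoW, psi_monoW, psi_monoW]
        simp only [List.map_cons, List.prod_cons, List.map_nil, List.prod_nil, mul_one]
        rw [hder]
        rfl
  have comm : ∀ (j : J) (f : MonoidAlgebra k (FreeMonoid (Letter J X))),
      ψ (Dop j f) = d j (ψ f) := by
    intro j f
    induction f using MonoidAlgebra.induction_linear with
    | zero => simp
    | add f g hf hg => rw [map_add, map_add, hf, hg, map_add, map_add]
    | single m b =>
        rw [Dop_single, map_smul, psi_deriv j m.toList, ← map_smul, ← map_smul]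
        congr 1
        rw [monoW, FreeMonoid.ofList_toList, MonoidAlgebra.smul_single', mul_one]
  have psi_gen : ∀ x : X, ψ (monoW [(([] : List J), x)]) = φ x := by
    intro x
    rw [psi_monoW]
    simp [hL, letMap]
  refine ⟨ψ, ⟨comm, psi_gen⟩, ?_⟩
  rintro ψ' ⟨hcomm', hgen'⟩
  have hlet : ∀ (ib : List J) (x : X), ψ' (monoW [(ib, x)]) = L (ib, x) := by
    intro ib x
    induction ib with
    | nil => rw [hgen']; rfl
    | cons j jb ih =>
        rw [← Dop_monoW_single, hcomm', ih]
        rfl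
  have hmono : ∀ u : List (Letter J X), ψ' (monoW u) = (u.map L).prod := by
    intro u
    induction u with
    | nil =>
        rw [show (monoW ([] : List (Letter J X)) :
          MonoidAlgebra k (FreeMonoid (Letter J X))) = 1 from rfl, map_one]
        rfl
    | cons l v ih =>
        obtain ⟨a, x⟩ := l
        rw [monoW_cons, map_mul, ih, hlet, List.map_cons, List.prod_cons]
  apply MonoidAlgebra.algHom_ext
  intro m
  have h1 := hmono m.toList
  have h2 := psi_monoW m.toList
  rw [monoW, FreeMonoid.ofList_toList] at h1 h2
  rw [h1, h2]
  exact Subsingleton.elim _ _
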